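/- arXiv:1507.00600 — 2 statements merged into one kernel-verified Lean document; each statement's English description precedes it below -/
import Mathlib

section
/- Let τ be a smooth binary relation on words over an alphabet Σ, fix a language M, and let L ⊆ M be a τ-independent language. For every i ≥ 1, writing D_j = μ^j(L) \ μ^{j-1}(L): σ_{μ^{i-1}(L)}^{≥2}(μ^i(L)) = σ_{μ^{i-1}(L)}^{≥2}(D_i) and σ_{μ^{i-1}(L)}^{≥2}(D_i) ⊆ σ_L^{≥2i}(D_1). -/
open Set

/-- Image of a language under a binary word relation: τ(X) = {y | ∃ x ∈ X, τ(x,y)}. -/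
def img {α : Type*} (τ : List α → List α → Prop) (X : Set (List α)) : Set (List α) :=
  {y | ∃ x ∈ X, τ x y}

/-- Inverse image: τ⁻¹(X) = {y | ∃ x ∈ X, τ(y,x)}. -/
def pre {α : Type*} (τ : List α → List α → Prop) (X : Set (List α)) : Set (List α) :=
  {y | ∃ x ∈ X, τ y x}

/-- ind(X) = M \ (τ(X) ∪ τ⁻¹(X)). -/
def ind {α : Type*} (τ : List α → List α → Prop) (M X : Set (List α)) : Set (List α) :=
  M \ (img τ X ∪ pre τ X)

/-- The max-min operator μ(X) = ind(X) \ τ⁻¹(ind(X)). -/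
def mu {α : Type*} (τ : List α → List α → Prop) (M X : Set (List α)) : Set (List α) :=
  ind τ M X \ pre τ (ind τ M X)

/-- σ_X(A) = τ⁻¹(A) ∩ ind(X). -/
def sig {α : Type*} (τ : List α → List α → Prop) (M X A : Set (List α)) : Set (List α) :=
  pre τ A ∩ ind τ M X

/-- Φ^*(A) = ⋃_{i≥0} Φ^i(A). -/
def opStar {α : Type*} (Φ : Set (List α) → Set (List α)) (A : Set (List α)) : Set (List α) :=
  ⋃ i : ℕ, Φ^[i] A

/-- Φ^+(A) = ⋃_{i≥1} Φ^i(A). -/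
def opPlus {α : Type*} (Φ : Set (List α) → Set (List α)) (A : Set (List α)) : Set (List α) :=
  ⋃ i ≥ 1, Φ^[i] A

/-- Φ^∩(A) = ⋂_{i≥1} Φ^i(A). -/
def opInter {α : Type*} (Φ : Set (List α) → Set (List α)) (A : Set (List α)) : Set (List α) :=
  ⋂ i ≥ 1, Φ^[i] A

/-- Φ^{≥k}(A) = ⋃_{i≥k} Φ^i(A). -/
def opGe {α : Type*} (Φ : Set (List α) → Set (List α)) (k : ℕ) (A : Set (List α)) : Set (List α) :=
  ⋃ i ≥ k, Φ^[i] A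

/-- A language is τ-independent if τ(L) ∩ L = ∅. -/
def indep {α : Type*} (τ : List α → List α → Prop) (L : Set (List α)) : Prop :=
  img τ L ∩ L = ∅

/-- τ is smooth (relative to M) if σ_X^∩(ind(X)) ⊆ σ_X^*(μ(X)) for every language X. -/
def smooth {α : Type*} (τ : List α → List α → Prop) (M : Set (List α)) : Prop :=
  ∀ X : Set (List α), opInter (sig τ M X) (ind τ M X) ⊆ opStar (sig τ M X) (mu τ M X)

/-- L is P_τ-maximal relative to M: L ⊆ M, L is τ-independent, and no word of M \ L
can be added to L keeping τ-independence. -/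
def maximalIndep {α : Type*} (τ : List α → List α → Prop) (M L : Set (List α)) : Prop :=
  L ⊆ M ∧ indep τ L ∧ ∀ w ∈ M \ L, ¬ indep τ (L ∪ {w})

/-!
For an independent `X ⊆ M` we have `X ⊆ μ(X)`, and `σ_X` kills `X` (a word of `ind(X)` has no
τ-edge into `X`), so `σ_X^{≥1}(A) = σ_X^{≥1}(A \ X)` whenever `X ⊆ A`; this is the first claim.
For the second, take `w ∈ μ(μ(X)) \ μ(X)`. Then `w ∈ ind(X)` but `w ∉ μ(X)`, so `w ∈ σ_X(ind X)`.
Unfolding `ind(X) ⊆ μ(X) ∪ σ_X(ind X)`, either `w` reaches `μ(X)` along `σ_X`, or it lies in every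
`σ_X^n(ind X)` and smoothness again puts it in `σ_X^*(μ X)`. The exponent is at least `2`, since
`w ∈ ind(μ X)` has no τ-edge into `μ(X)`. Hence `D_{n+2} ⊆ σ_{μ^n L}^{≥2}(D_{n+1})`; since `σ_X`
shrinks as `X` grows, induction on `n` gives `D_{n+1} ⊆ σ_L^{≥2n}(D_1)`.
-/

section

variable {α : Type*} {τ : List α → List α → Prop} {M X Y A B : Set (List α)}

lemma opGe_mono {Φ : Set (List α) → Set (List α)} (hΦ : Monotone Φ) (k : ℕ) (h : A ⊆ B) :
    opGe Φ k A ⊆ opGe Φ k B :=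
  biUnion_mono subset_rfl fun n _ => hΦ.iterate n h

lemma opGe_mono_of_le {Φ Ψ : Set (List α) → Set (List α)} (hΦ : Monotone Φ) (hΦΨ : Φ ≤ Ψ)
    (k : ℕ) (A : Set (List α)) : opGe Φ k A ⊆ opGe Ψ k A :=
  biUnion_mono subset_rfl fun n _ => hΦ.iterate_le_of_le hΦΨ n A

lemma opGe_anti {Φ : Set (List α) → Set (List α)} {k l : ℕ} (hkl : k ≤ l) (A : Set (List α)) :
    opGe Φ l A ⊆ opGe Φ k A :=
  biUnion_mono (fun _ hn => le_trans hkl hn) fun _ _ => subset_rfl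

lemma pre_mono (h : A ⊆ B) : pre τ A ⊆ pre τ B := fun _ ⟨x, hx, hyx⟩ => ⟨x, h hx, hyx⟩

lemma img_mono (h : A ⊆ B) : img τ A ⊆ img τ B := fun _ ⟨x, hx, hxy⟩ => ⟨x, h hx, hxy⟩

lemma ind_anti (h : X ⊆ Y) : ind τ M Y ⊆ ind τ M X :=
  sdiff_subset_sdiff_right (union_subset_union (img_mono h) (pre_mono h))

lemma sig_monotone : Monotone (sig τ M X) := fun _ _ h => inter_subset_inter_left _ (pre_mono h)

lemma sig_le_sig (h : X ⊆ Y) : sig τ M Y ≤ sig τ M X := fun _ =>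
  inter_subset_inter_right _ (ind_anti h)

lemma sig_iUnion {ι : Sort*} (A : ι → Set (List α)) :
    sig τ M X (⋃ j, A j) = ⋃ j, sig τ M X (A j) := by
  ext w
  simp only [sig, pre, mem_iUnion, mem_inter_iff, mem_ofPred_eq]
  grind

lemma sig_union : sig τ M X (A ∪ B) = sig τ M X A ∪ sig τ M X B := by
  rw [union_eq_iUnion, sig_iUnion, union_eq_iUnion]
  congr with (_ | _) <;> rfl

lemma iterate_sig_union (n : ℕ) :
    (sig τ M X)^[n] (A ∪ B) = (sig τ M X)^[n] A ∪ (sig τ M X)^[n] B := by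
  induction n with
  | zero => rfl
  | succ n ih => simp only [Function.iterate_succ_apply', ih, sig_union]

lemma sig_eq_empty_of_subset (h : A ⊆ X) : sig τ M X A = ∅ :=
  eq_empty_of_forall_notMem fun _ ⟨hpre, hind⟩ => hind.2 (Or.inr (pre_mono h hpre))

lemma iterate_succ_sig_eq_empty_of_subset (h : A ⊆ X) (n : ℕ) :
    (sig τ M X)^[n + 1] A = ∅ := by
  induction n with
  | zero => exact sig_eq_empty_of_subset h
  | succ n ih => rw [Function.iterate_succ_apply', ih, sig_eq_empty_of_subset (empty_subset X)]

lemma sig_opGe (k : ℕ) (A : Set (List α)) :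
    sig τ M X (opGe (sig τ M X) k A) = opGe (sig τ M X) (k + 1) A := by
  ext w
  simp only [opGe, sig_iUnion, mem_iUnion, ← Function.iterate_succ_apply' (sig τ M X)]
  exact ⟨fun ⟨n, hn, hw⟩ => ⟨n + 1, by omega, hw⟩,
    fun ⟨n, hn, hw⟩ => by
      obtain ⟨m, rfl⟩ := Nat.exists_eq_add_of_le' (Nat.one_le_of_lt hn)
      exact ⟨m, by omega, hw⟩⟩

lemma opGe_opGe_sig (a b : ℕ) (A : Set (List α)) :
    opGe (sig τ M X) a (opGe (sig τ M X) b A) ⊆ opGe (sig τ M X) (a + b) A := by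
  have iterate_opGe (n : ℕ) :
      (sig τ M X)^[n] (opGe (sig τ M X) b A) = opGe (sig τ M X) (n + b) A := by
    induction n with
    | zero => simp
    | succ n ih => rw [Function.iterate_succ_apply', ih, sig_opGe, Nat.succ_add]
  refine iUnion₂_subset fun n hn => ?_
  rw [iterate_opGe]
  exact opGe_anti (by omega) A

lemma opGe_sig_diff_self (hXA : X ⊆ A) {k : ℕ} (hk : 1 ≤ k) :
    opGe (sig τ M X) k (A \ X) = opGe (sig τ M X) k A := by
  refine (opGe_mono sig_monotone k sdiff_subset).antisymm (biUnion_mono subset_rfl fun n hn => ?_)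
  obtain ⟨m, rfl⟩ := Nat.exists_eq_add_of_le' (le_trans hk hn)
  rw [← sdiff_union_of_subset hXA, iterate_sig_union, iterate_succ_sig_eq_empty_of_subset subset_rfl,
    union_empty, sdiff_union_of_subset hXA]

lemma mu_subset_ind : mu τ M X ⊆ ind τ M X := sdiff_subset

lemma mu_subset : mu τ M X ⊆ M := fun _ hw => hw.1.1

lemma indep_mu : indep τ (mu τ M X) :=
  eq_empty_of_forall_notMem fun y ⟨⟨_, hx, hxy⟩, hy⟩ => hx.2 ⟨y, mu_subset_ind hy, hxy⟩

lemma subset_mu_of_indep (hXM : X ⊆ M) (hX : indep τ X) : X ⊆ mu τ M X := by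
  have hind : X ⊆ ind τ M X := by
    rintro w hw
    refine ⟨hXM hw, ?_⟩
    rintro (hw' | ⟨x, hx, hwx⟩)
    · exact hX.subset ⟨hw', hw⟩
    · exact hX.subset ⟨⟨w, hw, hwx⟩, hx⟩
  exact fun w hw => ⟨hind hw, fun ⟨v, hv, hwv⟩ => hv.2 (Or.inl ⟨w, hw, hwv⟩)⟩

lemma ind_subset_mu_union_sig : ind τ M X ⊆ mu τ M X ∪ sig τ M X (ind τ M X) := fun w hw => by
  by_cases hpre : w ∈ pre τ (ind τ M X)
  · exact Or.inr ⟨hpre, hw⟩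
  · exact Or.inl ⟨hw, hpre⟩

/-- A word of `σ_X(ind X)` that never reaches `μ(X)` along `σ_X` would stay in `σ_X^n(ind X)`
for every `n ≥ 1`; smoothness rules this out. -/
lemma sig_ind_subset_opStar (hsm : smooth τ M) :
    sig τ M X (ind τ M X) ⊆ opStar (sig τ M X) (mu τ M X) := by
  intro w hw
  by_contra hwμ
  have hwμ' (n : ℕ) : w ∉ (sig τ M X)^[n] (mu τ M X) := fun h => hwμ (mem_iUnion.mpr ⟨n, h⟩)
  have hstep (n : ℕ) : (sig τ M X)^[n + 1] (ind τ M X) ⊆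
      (sig τ M X)^[n + 1] (mu τ M X) ∪ (sig τ M X)^[n + 2] (ind τ M X) := by
    rw [Function.iterate_succ_apply _ (n + 1), ← iterate_sig_union]
    exact (sig_monotone.iterate (n + 1)) ind_subset_mu_union_sig
  have hall (n : ℕ) : w ∈ (sig τ M X)^[n + 1] (ind τ M X) := by
    induction n with
    | zero => exact hw
    | succ n ih => exact (hstep n ih).resolve_left (hwμ' (n + 1))
  refine hwμ (hsm X (mem_iInter₂.mpr fun n hn => ?_))
  obtain ⟨m, rfl⟩ := Nat.exists_eq_add_of_le' hn
  exact hall m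

lemma mu_mu_sdiff_mu_subset (hsm : smooth τ M) (hXM : X ⊆ M) (hX : indep τ X) :
    mu τ M (mu τ M X) \ mu τ M X ⊆ opGe (sig τ M X) 2 (mu τ M X \ X) := by
  rintro w ⟨hwμμ, hwμ⟩
  have hXμ : X ⊆ mu τ M X := subset_mu_of_indep hXM hX
  have hwind : w ∈ ind τ M (mu τ M X) := mu_subset_ind hwμμ
  have hwsig : w ∈ sig τ M X (ind τ M X) :=
    (ind_subset_mu_union_sig (ind_anti hXμ hwind)).resolve_left hwμ
  obtain ⟨j, hj⟩ := mem_iUnion.mp (sig_ind_subset_opStar hsm hwsig)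
  rw [opGe_sig_diff_self hXμ (by norm_num)]
  rcases j with _ | _ | j
  · exact absurd hj hwμ
  · exact absurd (Or.inr hj.1) hwind.2
  · exact mem_iUnion₂.mpr ⟨j + 2, by omega, hj⟩

variable {L : Set (List α)}

lemma iterate_mu_subset (hLM : L ⊆ M) : ∀ n, (mu τ M)^[n] L ⊆ M
  | 0 => hLM
  | n + 1 => by rw [Function.iterate_succ_apply']; exact mu_subset

lemma indep_iterate_mu (hL : indep τ L) : ∀ n, indep τ ((mu τ M)^[n] L)
  | 0 => hL
  | n + 1 => by rw [Function.iterate_succ_apply']; exact indep_mu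

lemma monotone_iterate_mu (hLM : L ⊆ M) (hL : indep τ L) :
    Monotone fun n => (mu τ M)^[n] L :=
  monotone_nat_of_le_succ fun n => by
    simp only [Function.iterate_succ_apply']
    exact subset_mu_of_indep (iterate_mu_subset hLM n) (indep_iterate_mu hL n)

lemma opGe_sig_subset_of_subset (hLX : L ⊆ X) {a k : ℕ} (h : A ⊆ opGe (sig τ M L) k B) :
    opGe (sig τ M X) a A ⊆ opGe (sig τ M L) (a + k) B :=
  calc opGe (sig τ M X) a A ⊆ opGe (sig τ M L) a A :=
        opGe_mono_of_le sig_monotone (sig_le_sig hLX) a A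
    _ ⊆ opGe (sig τ M L) a (opGe (sig τ M L) k B) := opGe_mono sig_monotone a h
    _ ⊆ opGe (sig τ M L) (a + k) B := opGe_opGe_sig a k B

lemma iterate_mu_sdiff_subset (hsm : smooth τ M) (hLM : L ⊆ M) (hL : indep τ L) (n : ℕ) :
    (mu τ M)^[n + 1] L \ (mu τ M)^[n] L ⊆ opGe (sig τ M L) (2 * n) (mu τ M L \ L) := by
  induction n with
  | zero => exact subset_iUnion₂_of_subset 0 le_rfl subset_rfl
  | succ n ih =>
    rw [Function.iterate_succ_apply' _ (n + 1), Function.iterate_succ_apply' _ n,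
      Nat.mul_succ, Nat.add_comm (2 * n) 2]
    refine (mu_mu_sdiff_mu_subset hsm (iterate_mu_subset hLM n) (indep_iterate_mu hL n)).trans ?_
    rw [← Function.iterate_succ_apply' (mu τ M) n]
    exact opGe_sig_subset_of_subset (monotone_iterate_mu hLM hL n.zero_le) ih

end

theorem stmt11 {α : Type*} (τ : List α → List α → Prop) (M L : Set (List α))
    (hsm : smooth τ M) (hLM : L ⊆ M) (hL : indep τ L)
    (i : ℕ) (hi : 1 ≤ i) :
    opGe (sig τ M ((mu τ M)^[i-1] L)) 2 ((mu τ M)^[i] L) =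
      opGe (sig τ M ((mu τ M)^[i-1] L)) 2 ((mu τ M)^[i] L \ (mu τ M)^[i-1] L) ∧
    opGe (sig τ M ((mu τ M)^[i-1] L)) 2 ((mu τ M)^[i] L \ (mu τ M)^[i-1] L) ⊆
      opGe (sig τ M L) (2*i) (mu τ M L \ L) := by
  obtain ⟨n, rfl⟩ := Nat.exists_eq_add_of_le' hi
  rw [Nat.add_sub_cancel]
  have hmono := monotone_iterate_mu (τ := τ) hLM hL
  refine ⟨(opGe_sig_diff_self (hmono n.le_succ) (by norm_num)).symm, ?_⟩
  rw [Nat.mul_succ, Nat.add_comm (2 * n) 2]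
  exact opGe_sig_subset_of_subset (hmono n.zero_le) (iterate_mu_sdiff_subset hsm hLM hL n)
end

section
/- Fix a linear order ≺ on the set of words over an alphabet Σ such that for every word w the set {v | v ≺ w} is finite, and let τ be a binary relation on words that is input-decreasing with respect to ≺. Then: (i) τ is input-altering; (ii) for every word x the set {y | τ(x,y)} is finite; (iii) the operator A ↦ τ⁻¹(A) is exhaustive, i.e., ⋂_{i≥1} (τ⁻¹)^i(X) = ∅ for every language X; and (iv) τ is smooth. -/
/-! Every step of τ⁻¹ strictly decreases the rank `w ↦ #{v | v ≺ w}`, a natural number, so a word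
lies in at most `rank w` of the iterates `(τ⁻¹)^i(X)` and `τ⁻¹` is exhaustive. The iterates of
`σ_X` are contained in those of `τ⁻¹`, hence `σ_X^∩(ind(X)) = ∅` and smoothness holds trivially. -/

open Set

section

variable {α : Type*}

lemma pre_mono_s16 (τ : List α → List α → Prop) : Monotone (pre τ) :=
  fun _ _ hAB _ ⟨x, hx, hτ⟩ => ⟨x, hAB hx, hτ⟩

lemma sig_le_pre (τ : List α → List α → Prop) (M X : Set (List α)) : sig τ M X ≤ pre τ :=
  fun _ => inter_subset_left

lemma opInter_subset_opInter {Φ Ψ : Set (List α) → Set (List α)} (hΨ : Monotone Ψ) (h : Φ ≤ Ψ)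
    (A : Set (List α)) : opInter Φ A ⊆ opInter Ψ A :=
  biInter_mono subset_rfl fun i _ => hΨ.le_iterate_of_le h i A

lemma le_rank_of_mem_iterate_pre {τ : List α → List α → Prop} {rank : List α → ℕ}
    (hrank : ∀ x y, τ x y → rank y < rank x) (A : Set (List α)) :
    ∀ (i : ℕ) (w : List α), w ∈ (pre τ)^[i] A → i ≤ rank w
  | 0, _, _ => Nat.zero_le _
  | i + 1, w, hw => by
    rw [Function.iterate_succ_apply'] at hw
    obtain ⟨x, hx, hwx⟩ := hw
    exact (le_rank_of_mem_iterate_pre hrank A i x hx).trans_lt (hrank w x hwx)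

lemma opInter_pre_eq_empty {τ : List α → List α → Prop} {rank : List α → ℕ}
    (hrank : ∀ x y, τ x y → rank y < rank x) (X : Set (List α)) : opInter (pre τ) X = ∅ := by
  refine eq_empty_of_forall_notMem fun w hw => ?_
  have hmem : w ∈ (pre τ)^[rank w + 1] X := mem_iInter₂.mp hw _ (Nat.le_add_left 1 _)
  exact Nat.not_succ_le_self _ (le_rank_of_mem_iterate_pre hrank X _ w hmem)

lemma smooth_of_opInter_pre_eq_empty {τ : List α → List α → Prop} (M : Set (List α))
    (h : ∀ X, opInter (pre τ) X = ∅) : smooth τ M := fun X =>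
  calc opInter (sig τ M X) (ind τ M X)
      ⊆ opInter (pre τ) (ind τ M X) := opInter_subset_opInter (pre_mono_s16 τ) (sig_le_pre τ M X) _
    _ = ∅ := h _
    _ ⊆ _ := empty_subset _

end

lemma strictMono_ncard_Iio {β : Type*} [Preorder β] (hfin : ∀ w : β, (Iio w).Finite) :
    StrictMono fun w : β => (Iio w).ncard :=
  fun _ w h => ncard_lt_ncard (Iio_ssubset_Iio h) (hfin w)

theorem stmt16 {α : Type*} (ord : LinearOrder (List α))
    (hfin : ∀ w : List α, {v : List α | ord.lt v w}.Finite)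
    (τ : List α → List α → Prop)
    (hdec : ∀ x y : List α, τ x y → ord.lt y x)
    (M : Set (List α)) :
    (∀ w : List α, ¬ τ w w) ∧
    (∀ x : List α, {y : List α | τ x y}.Finite) ∧
    (∀ X : Set (List α), opInter (pre τ) X = ∅) ∧
    smooth τ M := by
  let _ := ord
  have hexhaustive : ∀ X, opInter (pre τ) X = ∅ :=
    opInter_pre_eq_empty fun x y hxy => strictMono_ncard_Iio hfin (hdec x y hxy)
  exact ⟨fun w hw => (hdec w w hw).false, fun x => (hfin x).subset (hdec x), hexhaustive,
    smooth_of_opInter_pre_eq_empty M hexhaustive⟩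
end
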